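/- Let 𝔤 be a nonzero finite-dimensional nilpotent real Lie algebra with a complex structure J. Then there exists a nonzero closed (1,0)-form on 𝔤, i.e. a nonzero ℝ-linear map ω : 𝔤 → ℂ such that ω(JX) = i·ω(X) for all X ∈ 𝔤 and ω([X, Y]) = 0 for all X, Y ∈ 𝔤. -/

import Mathlib

/-!
The subspace `[𝔤, 𝔤] + J[𝔤, 𝔤]` is proper: by the Nijenhuis identity, if `𝔤^k + J𝔤^k = 𝔤` then
every bracket lies in `𝔤^(k+1) + J𝔤^(k+1)`, so `[𝔤, 𝔤] + J[𝔤, 𝔤] = 𝔤` would propagate down the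
whole lower central series, which reaches `0`. A nonzero real functional `f` vanishing on this
`J`-stable subspace gives the closed `(1,0)`-form `X ↦ f X - i f (J X)`.
-/

open LieModule

namespace Submodule

variable {R M : Type*} [CommRing R] [AddCommGroup M] [Module R M] (J : M →ₗ[R] M)

/-- For `J² = -1`, the smallest `J`-stable submodule containing `p`. -/
def jHull (p : Submodule R M) : Submodule R M := p ⊔ p.map J

variable {J} {p q : Submodule R M} {x : M}

theorem le_jHull : p ≤ p.jHull J := le_sup_left

theorem apply_mem_jHull (hx : x ∈ p) : J x ∈ p.jHull J :=
  le_sup_right (a := p) (mem_map_of_mem hx)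

theorem apply_mem_jHull_of_mem_jHull (hJ2 : ∀ x, J (J x) = -x) (hx : x ∈ p.jHull J) :
    J x ∈ p.jHull J := by
  obtain ⟨a, ha, _, ⟨b, hb, rfl⟩, rfl⟩ := mem_sup.mp hx
  rw [map_add, hJ2]
  exact add_mem (apply_mem_jHull ha) (neg_mem (le_jHull hb))

theorem jHull_le (hq : ∀ x ∈ q, J x ∈ q) (hpq : p ≤ q) : p.jHull J ≤ q :=
  sup_le hpq (map_le_iff_le_comap.mpr fun x hx => hq x (hpq hx))

@[simp]
theorem jHull_bot : (⊥ : Submodule R M).jHull J = ⊥ := by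
  simp [jHull]

end Submodule

namespace LieAlgebra

open Submodule

variable {R L : Type*} [CommRing R] [LieRing L] [LieAlgebra R L]

theorem lie_mem_lowerCentralSeries_succ_of_mem_right {k : ℕ} (x : L) {y : L}
    (hy : y ∈ lowerCentralSeries R L L k) : ⁅x, y⁆ ∈ lowerCentralSeries R L L (k + 1) := by
  rw [lowerCentralSeries_succ]
  exact LieSubmodule.lie_mem_lie (LieSubmodule.mem_top x) hy

theorem lie_mem_lowerCentralSeries_succ_of_mem_left {k : ℕ} {x : L} (y : L)
    (hx : x ∈ lowerCentralSeries R L L k) : ⁅x, y⁆ ∈ lowerCentralSeries R L L (k + 1) := by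
  rw [← lie_skew]
  exact neg_mem (lie_mem_lowerCentralSeries_succ_of_mem_right y hx)

variable {J : L →ₗ[R] L}

theorem lie_mem_jHull_lowerCentralSeries_succ
    (hNij : ∀ x y : L, ⁅J x, J y⁆ = ⁅x, y⁆ + J ⁅J x, y⁆ + J ⁅x, J y⁆) {k : ℕ} {x y : L}
    (hx : x ∈ (lowerCentralSeries R L L k).toSubmodule.jHull J)
    (hy : y ∈ (lowerCentralSeries R L L k).toSubmodule.jHull J) :
    ⁅x, y⁆ ∈ (lowerCentralSeries R L L (k + 1)).toSubmodule.jHull J := by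
  obtain ⟨a, ha, _, ⟨b, hb, rfl⟩, rfl⟩ := mem_sup.mp hx
  obtain ⟨c, hc, _, ⟨d, hd, rfl⟩, rfl⟩ := mem_sup.mp hy
  have expand : ⁅a + J b, c + J d⁆ = ⁅a, c⁆ + ⁅a, J d⁆ + ⁅J b, c⁆ +
      (⁅b, d⁆ + J ⁅J b, d⁆ + J ⁅b, J d⁆) := by
    rw [← hNij, lie_add, add_lie, add_lie]
    abel
  rw [expand]
  refine add_mem (add_mem (add_mem ?_ ?_) ?_) (add_mem (add_mem ?_ ?_) ?_)
  · exact le_jHull (lie_mem_lowerCentralSeries_succ_of_mem_left c ha)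
  · exact le_jHull (lie_mem_lowerCentralSeries_succ_of_mem_left (J d) ha)
  · exact le_jHull (lie_mem_lowerCentralSeries_succ_of_mem_right (J b) hc)
  · exact le_jHull (lie_mem_lowerCentralSeries_succ_of_mem_left d hb)
  · exact apply_mem_jHull (lie_mem_lowerCentralSeries_succ_of_mem_right (J b) hd)
  · exact apply_mem_jHull (lie_mem_lowerCentralSeries_succ_of_mem_left (J d) hb)

theorem jHull_lowerCentralSeries_eq_top (hJ2 : ∀ x, J (J x) = -x)
    (hNij : ∀ x y : L, ⁅J x, J y⁆ = ⁅x, y⁆ + J ⁅J x, y⁆ + J ⁅x, J y⁆)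
    (h : (lowerCentralSeries R L L 1).toSubmodule.jHull J = ⊤) (k : ℕ) :
    (lowerCentralSeries R L L k).toSubmodule.jHull J = ⊤ := by
  induction k with
  | zero => exact eq_top_iff.mpr le_jHull
  | succ k ih =>
    have hderived : (lowerCentralSeries R L L 1).toSubmodule ≤
        (lowerCentralSeries R L L (k + 1)).toSubmodule.jHull J := by
      rw [lowerCentralSeries_succ, LieSubmodule.lieIdeal_oper_eq_linear_span', span_le]
      rintro - ⟨x, -, y, -, rfl⟩
      exact lie_mem_jHull_lowerCentralSeries_succ hNij (ih ▸ mem_top) (ih ▸ mem_top)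
    rw [eq_top_iff, ← h]
    exact jHull_le (fun _ => apply_mem_jHull_of_mem_jHull hJ2) hderived

theorem jHull_lowerCentralSeries_one_ne_top [LieRing.IsNilpotent L] [Nontrivial L]
    (hJ2 : ∀ x, J (J x) = -x)
    (hNij : ∀ x y : L, ⁅J x, J y⁆ = ⁅x, y⁆ + J ⁅J x, y⁆ + J ⁅x, J y⁆) :
    (lowerCentralSeries R L L 1).toSubmodule.jHull J ≠ ⊤ := by
  intro h
  obtain ⟨k, hk⟩ := (isNilpotent_iff R L L).mp inferInstance
  have := jHull_lowerCentralSeries_eq_top hJ2 hNij h k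
  rw [hk, LieSubmodule.bot_toSubmodule, jHull_bot] at this
  exact bot_ne_top this

end LieAlgebra

namespace LinearMap

variable {V : Type*} [AddCommGroup V] [Module ℝ V] (J : V →ₗ[ℝ] V)

def oneZeroForm (f : V →ₗ[ℝ] ℝ) : V →ₗ[ℝ] ℂ where
  toFun x := f x - Complex.I * f (J x)
  map_add' x y := by push_cast [map_add]; ring
  map_smul' c x := by
    simp only [map_smul, smul_eq_mul, Complex.real_smul, RingHom.id_apply]
    push_cast
    ring

variable {J} (f : V →ₗ[ℝ] ℝ)

@[simp]
theorem oneZeroForm_apply (x : V) : oneZeroForm J f x = f x - Complex.I * f (J x) := rfl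

theorem oneZeroForm_apply_J (hJ2 : ∀ x, J (J x) = -x) (x : V) :
    oneZeroForm J f (J x) = Complex.I * oneZeroForm J f x := by
  simp only [oneZeroForm_apply, hJ2, map_neg, Complex.ofReal_neg]
  linear_combination (f (J x) : ℂ) * Complex.I_mul_I

theorem oneZeroForm_ne_zero {f : V →ₗ[ℝ] ℝ} (hf : f ≠ 0) : oneZeroForm J f ≠ 0 := by
  refine fun h => hf (ext fun x => ?_)
  simpa using congrArg Complex.re (LinearMap.congr_fun h x)

end LinearMap

theorem exists_closed_one_zero_form_general (g : Type*) [LieRing g] [LieAlgebra ℝ g]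
    [Nontrivial g] [LieRing.IsNilpotent g]
    (J : g →ₗ[ℝ] g) (hJ2 : ∀ X : g, J (J X) = -X)
    (hNij : ∀ X Y : g, ⁅J X, J Y⁆ = ⁅X, Y⁆ + J ⁅J X, Y⁆ + J ⁅X, J Y⁆) :
    ∃ ω : g →ₗ[ℝ] ℂ, ω ≠ 0 ∧ (∀ X : g, ω (J X) = Complex.I * ω X) ∧
      ∀ X Y : g, ω ⁅X, Y⁆ = 0 := by
  set W := (lowerCentralSeries ℝ g g 1).toSubmodule.jHull J
  obtain ⟨f, hf, hWf⟩ := W.exists_le_ker_of_lt_top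
    (lt_top_iff_ne_top.mpr (LieAlgebra.jHull_lowerCentralSeries_one_ne_top hJ2 hNij))
  refine ⟨LinearMap.oneZeroForm J f, LinearMap.oneZeroForm_ne_zero hf,
    LinearMap.oneZeroForm_apply_J f hJ2, fun X Y => ?_⟩
  have hbracket : ⁅X, Y⁆ ∈ W :=
    Submodule.le_jHull
      (LieAlgebra.lie_mem_lowerCentralSeries_succ_of_mem_right X (Submodule.mem_top (x := Y)))
  have hf₁ : f ⁅X, Y⁆ = 0 := hWf hbracket
  have hf₂ : f (J ⁅X, Y⁆) = 0 := hWf (Submodule.apply_mem_jHull_of_mem_jHull hJ2 hbracket)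
  simp [hf₁, hf₂]

/-- If `𝔤` is a nonzero finite-dimensional nilpotent real Lie algebra with a complex
structure `J`, then there exists a nonzero closed `(1,0)`-form on `𝔤`: a nonzero
`ℝ`-linear map `ω : 𝔤 → ℂ` with `ω(JX) = i·ω(X)` for all `X` and `ω([X,Y]) = 0`
for all `X, Y`. -/
theorem exists_closed_one_zero_form (g : Type*) [LieRing g] [LieAlgebra ℝ g]
    [FiniteDimensional ℝ g] [Nontrivial g] [LieRing.IsNilpotent g]
    (J : g →ₗ[ℝ] g) (hJ2 : ∀ X : g, J (J X) = -X)
    (hNij : ∀ X Y : g, ⁅J X, J Y⁆ = ⁅X, Y⁆ + J ⁅J X, Y⁆ + J ⁅X, J Y⁆) :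
    ∃ ω : g →ₗ[ℝ] ℂ, ω ≠ 0 ∧ (∀ X : g, ω (J X) = Complex.I * ω X) ∧
      ∀ X Y : g, ω ⁅X, Y⁆ = 0 :=
  exists_closed_one_zero_form_general g J hJ2 hNij
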